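/- If E is not a parent of Y, then S_ICP = S_AS if and only if S_ICP is invariant. -/

import Mathlib

/-- Nodes of the graph: the environment node `E`, predictor nodes `V j` for
`j ∈ {1, …, d}` (represented by `Fin d`), and the response node `Y`. -/
inductive Node (d : ℕ) : Type where
  | E : Node d
  | V : Fin d → Node d
  | Y : Node d
deriving DecidableEq

/-- A directed acyclic graph on `{E} ∪ {1, …, d} ∪ {Y}` in which `E` has no
parents (`E` is exogenous). -/
structure CGraph (d : ℕ) where
  adj : Node d → Node d → Prop
  acyclic : ∀ v, ¬ Relation.TransGen adj v v
  exogenous : ∀ v, ¬ adj v Node.E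

namespace CGraph

variable {d : ℕ} (G : CGraph d)

/-- Undirected adjacency: an edge between `u` and `v` in either direction. -/
def Edge (u v : Node d) : Prop := G.adj u v ∨ G.adj v u

/-- `p` is a path between `a` and `b`: a duplicate-free list of nodes starting
at `a`, ending at `b`, with consecutive nodes adjacent (in either direction). -/
def IsPath (p : List (Node d)) (a b : Node d) : Prop :=
  p.head? = some a ∧ p.getLast? = some b ∧ p.Nodup ∧ p.Chain' G.Edge

/-- `x` is a (strict) descendant of `v`. -/
def Desc (v x : Node d) : Prop := Relation.TransGen G.adj v x

/-- The consecutive triple `u, m, w` on a path blocks the path given `C`: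
either `m` is a non-collider lying in `C`, or `m` is a collider such that
neither `m` nor any of its descendants lies in `C`. -/
def BlockedAt (C : Set (Node d)) (u m w : Node d) : Prop :=
  (¬ (G.adj u m ∧ G.adj w m) ∧ m ∈ C) ∨
  ((G.adj u m ∧ G.adj w m) ∧ m ∉ C ∧ ∀ x, G.Desc m x → x ∉ C)

/-- A path `p` is blocked by `C` if some consecutive triple on it blocks it. -/
def Blocked (C : Set (Node d)) (p : List (Node d)) : Prop :=
  ∃ q u m w r, p = q ++ u :: m :: w :: r ∧ G.BlockedAt C u m w

/-- `a` and `b` are d-separated given `C`: every path between them is blocked. -/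
def DSep (a b : Node d) (C : Set (Node d)) : Prop :=
  ∀ p, G.IsPath p a b → G.Blocked C p

/-- `S ⊆ {1, …, d}` is invariant if `E` and `Y` are d-separated given `S`. -/
def Invariant (S : Set (Fin d)) : Prop := G.DSep Node.E Node.Y (Node.V '' S)

/-- `S` is minimally invariant if it is invariant and no strict subset of `S`
is invariant. -/
def MinInvariant (S : Set (Fin d)) : Prop :=
  G.Invariant S ∧ ∀ S', S' ⊂ S → ¬ G.Invariant S'

/-- `S_AS`: the union of all minimally invariant sets. -/
def SAS : Set (Fin d) := ⋃₀ {S | G.MinInvariant S}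

/-- `S_ICP`: the intersection of all invariant sets (`∅` if there are none). -/
def SICP : Set (Fin d) :=
  {j | (∃ S, G.Invariant S) ∧ ∀ S, G.Invariant S → j ∈ S}

/-- `S_AS^m`: the union of all minimally invariant sets of cardinality `≤ m`. -/
def SASm (m : ℕ) : Set (Fin d) := ⋃₀ {S | G.MinInvariant S ∧ S.ncard ≤ m}

/-- The parents of `Y` among `{1, …, d}`. -/
def paY : Set (Fin d) := {j | G.adj (Node.V j) Node.Y}

/-- The children of `E` among `{1, …, d}`. -/
def chE : Set (Fin d) := {j | G.adj Node.E (Node.V j)}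

/-- The ancestors of `Y` among `{1, …, d}`. -/
def anY : Set (Fin d) := {j | Relation.TransGen G.adj (Node.V j) Node.Y}

/-- `PA(A)`: the union of the parent sets of the elements of `A ⊆ {1, …, d}`. -/
def paOf (A : Set (Fin d)) : Set (Fin d) := {j | ∃ i ∈ A, G.adj (Node.V j) (Node.V i)}

end CGraph

/-!
`S_ICP` lies in every invariant set. If it is itself invariant, it is therefore the only
minimally invariant set, and `S_AS = S_ICP`. Conversely, if `E → Y` is not an edge, the parents
of `Y` form an invariant set: a path from `Y` to `E` either starts through a parent of `Y`, a
non-collider in the set, or leaves `Y` along directed edges and, since `E` has no parents, must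
turn back at a collider descending from `Y`, which by acyclicity lies outside the set together
with its descendants. So some minimally invariant `M` exists, and `S_ICP ⊆ M ⊆ S_AS = S_ICP`
makes `S_ICP = M` invariant.
-/

namespace CGraph

variable {d : ℕ} (G : CGraph d)

lemma adj_asymm {u v : Node d} (huv : G.adj u v) : ¬ G.adj v u := fun hvu =>
  G.acyclic u (.tail (.single huv) hvu)

lemma not_mem_paY_of_desc {x : Node d} (hx : G.Desc Node.Y x) : x ∉ Node.V '' G.paY := by
  rintro ⟨j, hj, rfl⟩
  exact G.acyclic Node.Y (hx.tail hj)

section Blocked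

variable {G}

lemma BlockedAt.symm {C : Set (Node d)} {u m w : Node d} (h : G.BlockedAt C u m w) :
    G.BlockedAt C w m u := by
  unfold BlockedAt at h ⊢
  rwa [and_comm (a := G.adj w m)]

lemma Blocked.cons {C : Set (Node d)} {p : List (Node d)} (a : Node d) (h : G.Blocked C p) :
    G.Blocked C (a :: p) := by
  obtain ⟨q, u, m, w, r, rfl, hb⟩ := h
  exact ⟨a :: q, u, m, w, r, rfl, hb⟩

lemma Blocked.reverse {C : Set (Node d)} {p : List (Node d)} (h : G.Blocked C p) :
    G.Blocked C p.reverse := by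
  obtain ⟨q, u, m, w, r, rfl, hb⟩ := h
  exact ⟨r.reverse, w, m, u, q.reverse, by simp, hb.symm⟩

lemma IsPath.reverse {p : List (Node d)} {a b : Node d} (h : G.IsPath p a b) :
    G.IsPath p.reverse b a := by
  obtain ⟨hhead, hlast, hnodup, hchain⟩ := h
  refine ⟨by rwa [List.head?_reverse], by rwa [List.getLast?_reverse],
    List.nodup_reverse.mpr hnodup, ?_⟩
  exact List.isChain_reverse.mpr (hchain.imp fun _ _ h => h.symm)

lemma DSep.symm {a b : Node d} {C : Set (Node d)} (h : G.DSep a b C) : G.DSep b a C :=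
  fun p hp => by simpa using (h _ hp.reverse).reverse

end Blocked

lemma blocked_of_desc_of_getLast?_eq_E {y : Node d} {C : Set (Node d)}
    (hC : ∀ x, G.Desc y x → x ∉ C) (s : List (Node d)) :
    ∀ w m, G.adj w m → G.Desc y m → (m :: s).getLast? = some Node.E →
      (m :: s).IsChain G.Edge → G.Blocked C (w :: m :: s) := by
  induction s with
  | nil =>
    rintro w m hwm - hlast -
    obtain rfl : m = Node.E := by simpa using hlast
    exact absurd hwm (G.exogenous w)
  | cons a s ih =>
    intro w m hwm hym hlast hchain
    obtain ⟨hma | ham, hchain⟩ := List.isChain_cons_cons.mp hchain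
    · rw [List.getLast?_cons_cons] at hlast
      exact (ih m a hma (hym.tail hma) hlast hchain).cons w
    · exact ⟨[], w, m, a, s, rfl,
        Or.inr ⟨⟨hwm, ham⟩, hC m hym, fun x hx => hC x (hym.trans hx)⟩⟩

lemma dSep_Y_E_paY (h : ¬ G.adj Node.E Node.Y) :
    G.DSep Node.Y Node.E (Node.V '' G.paY) := by
  rintro (_ | ⟨y, _ | ⟨v, s⟩⟩) ⟨hhead, hlast, hnodup, hchain⟩
  · simp at hhead
  · simp_all
  obtain rfl : y = Node.Y := by simpa using hhead
  rw [List.getLast?_cons_cons] at hlast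
  obtain ⟨hYv | hvY, hchain⟩ := List.isChain_cons_cons.mp hchain
  · exact G.blocked_of_desc_of_getLast?_eq_E (fun _ => G.not_mem_paY_of_desc) s
      Node.Y v hYv (.single hYv) hlast hchain
  obtain _ | ⟨b, s⟩ := s
  · obtain rfl : v = Node.E := by simpa using hlast
    exact absurd hvY h
  obtain ⟨hYvs, hvs⟩ := List.nodup_cons.mp hnodup
  obtain ⟨j, rfl⟩ : ∃ j, v = Node.V j := by
    cases v with
    | E =>
      rw [List.getLast?_cons_cons] at hlast
      exact absurd (List.mem_of_getLast? hlast) (List.nodup_cons.mp hvs).1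
    | V j => exact ⟨j, rfl⟩
    | Y => simp at hYvs
  exact ⟨[], Node.Y, Node.V j, b, s, rfl,
    Or.inl ⟨fun hcol => G.adj_asymm hvY hcol.1, j, hvY, rfl⟩⟩

lemma invariant_paY (h : ¬ G.adj Node.E Node.Y) : G.Invariant G.paY :=
  (G.dSep_Y_E_paY h).symm

lemma minInvariant_iff_minimal {S : Set (Fin d)} : G.MinInvariant S ↔ Minimal G.Invariant S := by
  rw [minimal_iff_forall_lt]
  rfl

lemma exists_minInvariant {S : Set (Fin d)} (hS : G.Invariant S) : ∃ M, G.MinInvariant M := by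
  simp_rw [minInvariant_iff_minimal]
  exact exists_minimal_of_wellFoundedLT _ ⟨S, hS⟩

lemma SICP_subset {S : Set (Fin d)} (hS : G.Invariant S) : G.SICP ⊆ S :=
  fun _ hj => hj.2 S hS

lemma subset_SAS {M : Set (Fin d)} (hM : G.MinInvariant M) : M ⊆ G.SAS :=
  Set.subset_sUnion_of_mem hM

lemma minInvariant_SICP (h : G.Invariant G.SICP) : G.MinInvariant G.SICP :=
  ⟨h, fun _ hss hS => hss.not_subset (G.SICP_subset hS)⟩

lemma eq_SICP_of_minInvariant (h : G.Invariant G.SICP) {M : Set (Fin d)}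
    (hM : G.MinInvariant M) : M = G.SICP := by
  by_contra hne
  exact hM.2 _ ((G.SICP_subset hM.1).ssubset_of_ne (Ne.symm hne)) h

lemma SAS_eq_SICP (h : G.Invariant G.SICP) : G.SAS = G.SICP := by
  refine (Set.sUnion_subset fun M hM => ?_).antisymm (G.subset_SAS (G.minInvariant_SICP h))
  exact (G.eq_SICP_of_minInvariant h hM).le

end CGraph

/-- if `E` is not a parent of `Y`, then `S_ICP = S_AS` if and
only if `S_ICP` is invariant. -/
theorem SICP_eq_SAS_iff_invariant {d : ℕ} (G : CGraph d)
    (h : ¬ G.adj Node.E Node.Y) :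
    G.SICP = G.SAS ↔ G.Invariant G.SICP := by
  refine ⟨fun heq => ?_, fun hinv => (G.SAS_eq_SICP hinv).symm⟩
  obtain ⟨M, hM⟩ := G.exists_minInvariant (G.invariant_paY h)
  have hM_eq : M = G.SICP := (heq ▸ G.subset_SAS hM).antisymm (G.SICP_subset hM.1)
  exact hM_eq ▸ hM.1
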